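/- arXiv:1103.3762 — 3 statements merged into one kernel-verified Lean document; each statement's English description precedes it below -/
import Mathlib

section
/- The set P_d = (ℝ ∪ {∞}) \ {√d, -√d} with operation x ⊙_d y = (d + xy)/(x + y) (suitably extended to ∞) forms a commutative group with identity ∞ and inverse of x given by -x, isomorphic to the multiplicative group ℝ* via ρ_d. -/
/-- The transform ρ_d(x) = √d·(x+1)/(x-1). -/
noncomputable def rho (d x : ℝ) : ℝ := Real.sqrt d * (x + 1) / (x - 1)

/-- The product ⊙_d extended to ℝ ∪ {∞}, where `none` plays the role of ∞:
∞ is the identity and x ⊙_d (-x) = ∞. -/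
noncomputable def odotInf (d : ℝ) : Option ℝ → Option ℝ → Option ℝ
  | none, y => y
  | some x, none => some x
  | some x, some y => if x + y = 0 then none else some ((d + x * y) / (x + y))

/-- P_d = (ℝ ∪ {∞}) \ {√d, -√d}. -/
def Pd (d : ℝ) : Type := {a : Option ℝ // a ≠ some (Real.sqrt d) ∧ a ≠ some (-Real.sqrt d)}

/-!
With s = √d, the map ρ_d is the Möbius transformation x ↦ s(x+1)/(x-1), whose inverse is the
Cayley-type map a ↦ (a+s)/(a-s). Clearing denominators, ρ_d(x) + ρ_d(y) = 2s(xy-1)/((x-1)(y-1))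
and d + ρ_d(x)ρ_d(y) = 2d(xy+1)/((x-1)(y-1)), so ρ_d(x) ⊙_d ρ_d(y) = s(xy+1)/(xy-1) = ρ_d(xy),
while ρ_d(x) + ρ_d(y) = 0 exactly when xy = 1. Hence ρ_d, sending 1 to ∞, is a
bijection ℝˣ → P_d carrying multiplication to ⊙_d, and the group structure of ℝˣ transported
along it is the required one; its inverses are x ↦ -x because x ⊙_d (-x) = ∞.
-/

noncomputable def cayley (d a : ℝ) : ℝ := (a + Real.sqrt d) / (a - Real.sqrt d)

section Moebius

variable {d : ℝ}

lemma rho_ne_sqrt (hd : 0 < d) {x : ℝ} (hx : x ≠ 1) : rho d x ≠ Real.sqrt d := by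
  have hs : Real.sqrt d ≠ 0 := Real.sqrt_ne_zero'.2 hd
  rw [rho, Ne, div_eq_iff (sub_ne_zero.2 hx)]
  intro h
  exact hs (by linear_combination h / 2)

lemma rho_ne_neg_sqrt (hd : 0 < d) {x : ℝ} (hx : x ≠ 1) (hx0 : x ≠ 0) :
    rho d x ≠ -Real.sqrt d := by
  have hs : Real.sqrt d ≠ 0 := Real.sqrt_ne_zero'.2 hd
  rw [rho, Ne, div_eq_iff (sub_ne_zero.2 hx)]
  intro h
  have : Real.sqrt d * x = 0 := by linear_combination h / 2
  exact (mul_ne_zero hs hx0) this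

lemma cayley_rho (hd : 0 < d) {x : ℝ} (hx : x ≠ 1) : cayley d (rho d x) = x := by
  have hs : Real.sqrt d ≠ 0 := Real.sqrt_ne_zero'.2 hd
  have hx1 : x - 1 ≠ 0 := sub_ne_zero.2 hx
  rw [cayley, rho]
  field_simp
  ring

lemma rho_cayley (hd : 0 < d) {a : ℝ} (ha : a ≠ Real.sqrt d) : rho d (cayley d a) = a := by
  have hs : Real.sqrt d ≠ 0 := Real.sqrt_ne_zero'.2 hd
  have ha1 : a - Real.sqrt d ≠ 0 := sub_ne_zero.2 ha
  rw [cayley, rho]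
  field_simp
  rw [div_eq_iff fun h => hs (by linear_combination h / 2)]
  ring

lemma cayley_ne_one (hd : 0 < d) {a : ℝ} (ha : a ≠ Real.sqrt d) : cayley d a ≠ 1 := by
  have hs : Real.sqrt d ≠ 0 := Real.sqrt_ne_zero'.2 hd
  rw [cayley, Ne, div_eq_one_iff_eq (sub_ne_zero.2 ha)]
  intro h
  exact hs (by linear_combination h / 2)

lemma cayley_ne_zero {a : ℝ} (ha : a ≠ Real.sqrt d) (ha' : a ≠ -Real.sqrt d) :
    cayley d a ≠ 0 :=
  div_ne_zero (fun h => ha' (eq_neg_of_add_eq_zero_left h)) (sub_ne_zero.2 ha)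

lemma rho_add_rho {x y : ℝ} (hx : x ≠ 1) (hy : y ≠ 1) :
    rho d x + rho d y = 2 * Real.sqrt d * (x * y - 1) / ((x - 1) * (y - 1)) := by
  have hx1 : x - 1 ≠ 0 := sub_ne_zero.2 hx
  have hy1 : y - 1 ≠ 0 := sub_ne_zero.2 hy
  rw [rho, rho]
  field_simp
  ring

lemma add_rho_mul_rho (hd : 0 ≤ d) {x y : ℝ} (hx : x ≠ 1) (hy : y ≠ 1) :
    d + rho d x * rho d y = 2 * d * (x * y + 1) / ((x - 1) * (y - 1)) := by
  have hx1 : x - 1 ≠ 0 := sub_ne_zero.2 hx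
  have hy1 : y - 1 ≠ 0 := sub_ne_zero.2 hy
  rw [rho, rho]
  field_simp
  linear_combination ((x + 1) * (y + 1)) * Real.sq_sqrt hd

lemma rho_add_rho_eq_zero_iff (hd : 0 < d) {x y : ℝ} (hx : x ≠ 1) (hy : y ≠ 1) :
    rho d x + rho d y = 0 ↔ x * y = 1 := by
  have hs : Real.sqrt d ≠ 0 := Real.sqrt_ne_zero'.2 hd
  have hxy : (x - 1) * (y - 1) ≠ 0 := mul_ne_zero (sub_ne_zero.2 hx) (sub_ne_zero.2 hy)
  rw [rho_add_rho hx hy, div_eq_zero_iff, or_iff_left hxy, mul_eq_zero, sub_eq_zero,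
    or_iff_right (mul_ne_zero two_ne_zero hs)]

lemma rho_mul (hd : 0 < d) {x y : ℝ} (hx : x ≠ 1) (hy : y ≠ 1) (hxy : x * y ≠ 1) :
    rho d (x * y) = (d + rho d x * rho d y) / (rho d x + rho d y) := by
  have hs : Real.sqrt d ≠ 0 := Real.sqrt_ne_zero'.2 hd
  have hx1 : x - 1 ≠ 0 := sub_ne_zero.2 hx
  have hy1 : y - 1 ≠ 0 := sub_ne_zero.2 hy
  have hxy1 : x * y - 1 ≠ 0 := sub_ne_zero.2 hxy
  rw [add_rho_mul_rho hd.le hx hy, rho_add_rho hx hy, rho]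
  field_simp
  linear_combination (x * y + 1) * Real.sq_sqrt hd.le

end Moebius

namespace Pd

variable {d : ℝ}

noncomputable def ofUnits (hd : 0 < d) (u : ℝˣ) : Pd d :=
  ⟨if (u : ℝ) = 1 then none else some (rho d u), by
    split_ifs with hu
    · simp
    · simpa using ⟨rho_ne_sqrt hd hu, rho_ne_neg_sqrt hd hu u.ne_zero⟩⟩

lemma ofUnits_val (hd : 0 < d) (u : ℝˣ) :
    (ofUnits hd u).val = if (u : ℝ) = 1 then none else some (rho d u) := rfl

lemma ofUnits_injective (hd : 0 < d) : Function.Injective (ofUnits hd) := by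
  intro u v huv
  have h := congrArg Subtype.val huv
  rw [ofUnits_val, ofUnits_val] at h
  ext
  split_ifs at h with hu hv hv
  · rw [hu, hv]
  · rw [← cayley_rho hd hu, ← cayley_rho hd hv, Option.some_inj.1 h]

lemma ofUnits_surjective (hd : 0 < d) : Function.Surjective (ofUnits hd) := by
  rintro ⟨_ | a, ha, ha'⟩
  · exact ⟨1, Subtype.ext (by simp [ofUnits_val])⟩
  · have ha : a ≠ Real.sqrt d := fun h => by simp [h] at ha
    have ha' : a ≠ -Real.sqrt d := fun h => by simp [h] at ha'
    refine ⟨Units.mk0 _ (cayley_ne_zero ha ha'), Subtype.ext ?_⟩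
    simp [ofUnits_val, cayley_ne_one hd ha, rho_cayley hd ha]

lemma ofUnits_mul (hd : 0 < d) (u v : ℝˣ) :
    (ofUnits hd (u * v)).val = odotInf d (ofUnits hd u).val (ofUnits hd v).val := by
  simp only [ofUnits_val, Units.val_mul]
  by_cases hu : (u : ℝ) = 1
  · simp [hu, odotInf]
  by_cases hv : (v : ℝ) = 1
  · simp [hu, hv, odotInf]
  by_cases huv : (u : ℝ) * v = 1
  · simp [hu, hv, huv, odotInf, (rho_add_rho_eq_zero_iff hd hu hv).2 huv]
  · simp [hu, hv, huv, odotInf, mt (rho_add_rho_eq_zero_iff hd hu hv).1 huv, rho_mul hd hu hv huv]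

noncomputable def unitsEquiv (hd : 0 < d) : ℝˣ ≃ Pd d :=
  Equiv.ofBijective (ofUnits hd) ⟨ofUnits_injective hd, ofUnits_surjective hd⟩

def neg (x : Pd d) : Pd d :=
  ⟨Option.map Neg.neg x.val, by
    obtain ⟨_ | a, ha, ha'⟩ := x
    · simp
    · simp only [Option.map_some, ne_eq, Option.some_inj, neg_eq_iff_eq_neg, neg_neg]
      exact ⟨fun h => ha' (congrArg some h), fun h => ha (congrArg some h)⟩⟩

lemma odotInf_neg (x : Pd d) : odotInf d x.val (neg x).val = none := by
  obtain ⟨_ | a, _⟩ := x <;> simp [neg, odotInf]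

lemma inv_val [Group (Pd d)] (hmul : ∀ x y : Pd d, (x * y).val = odotInf d x.val y.val)
    (hone : (1 : Pd d).val = none) (x : Pd d) : (x⁻¹).val = Option.map Neg.neg x.val := by
  have : x * neg x = 1 := Subtype.ext (by rw [hmul, hone, odotInf_neg])
  rw [inv_eq_of_mul_eq_one_right this, neg]

end Pd

theorem Pd_commGroup_general (d : ℝ) (hd : 0 < d) :
    ∃ G : CommGroup (Pd d),
      (∀ x y : Pd d, (G.mul x y).val = odotInf d x.val y.val) ∧
      (G.one.val = none) ∧
      (∀ x : Pd d, (G.inv x).val = Option.map (fun r => -r) x.val) ∧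
      ∃ e : @MulEquiv ℝˣ (Pd d) _ G.toMul,
        ∀ u : ℝˣ, (e u).val = if (u : ℝ) = 1 then none else some (rho d (u : ℝ)) := by
  let Φ := Pd.unitsEquiv hd
  let G : CommGroup (Pd d) := Φ.symm.commGroup
  have hmul : ∀ x y : Pd d, (x * y).val = odotInf d x.val y.val := by
    intro x y
    obtain ⟨u, rfl⟩ := Φ.surjective x
    obtain ⟨v, rfl⟩ := Φ.surjective y
    show (Φ (Φ.symm (Φ u) * Φ.symm (Φ v))).val = _
    simp only [Equiv.symm_apply_apply]
    exact Pd.ofUnits_mul hd u v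
  have hone : (1 : Pd d).val = none := by
    show (Pd.ofUnits hd 1).val = none
    simp [Pd.ofUnits_val]
  exact ⟨G, hmul, hone, Pd.inv_val hmul hone, Φ.symm.mulEquiv.symm, fun u => by
    rw [Equiv.mulEquiv_symm_apply, Equiv.symm_symm]; rfl⟩

/-- (P_d, ⊙_d) is a commutative group with identity ∞, inverse x ↦ -x, and ρ_d is an
isomorphism from (ℝ*, ·) onto it (where ρ_d(1) = ∞). -/
theorem Pd_commGroup (d : ℝ) (hd : 0 < d) (hns : ¬ ∃ q : ℚ, (q : ℝ) ^ 2 = d) :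
    ∃ G : CommGroup (Pd d),
      (∀ x y : Pd d, (G.mul x y).val = odotInf d x.val y.val) ∧
      (G.one.val = none) ∧
      (∀ x : Pd d, (G.inv x).val = Option.map (fun r => -r) x.val) ∧
      ∃ e : @MulEquiv ℝˣ (Pd d) _ G.toMul,
        ∀ u : ℝˣ, (e u).val = if (u : ℝ) = 1 then none else some (rho d (u : ℝ)) :=
  Pd_commGroup_general d hd
end

section
/- For points (s,t), (u,v) on the Pell hyperbola H_d with t, v ≠ 0, the pushforward of ⊙_d under ε_d equals the Brahmagupta product: ε_d(τ(s,t) ⊙_d τ(u,v)) = (su + d t v, t u + s v). In particular ((1+s)/t) ⊙_d ((1+u)/v) = (1 + su + dtv)/(tu + sv). -/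
/-- The product x ⊙_d y = (d + xy)/(x + y). -/
noncomputable def odot (d x y : ℝ) : ℝ := (d + x * y) / (x + y)

/-- τ(x,y) = (1+x)/y. -/
noncomputable def tau (p : ℝ × ℝ) : ℝ := (1 + p.1) / p.2

/-- ε_d(m) = ((m²+d)/(m²−d), 2m/(m²−d)). -/
noncomputable def eps (d m : ℝ) : ℝ × ℝ :=
  ((m ^ 2 + d) / (m ^ 2 - d), 2 * m / (m ^ 2 - d))

/-!
The map `ε_d` is a homomorphism from `⊙_d` to the Brahmagupta product: clearing the
denominator `(x + y)²` turns `ε_d(x ⊙_d y)` into `ε_d(x) · ε_d(y)` by a polynomial identity.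
On the hyperbola `ε_d ∘ τ = id`, because `τ(s,t)² − d = 2(1+s)/t²`, and `τ ∘ ε_d = id` away
from `m² = d`. Hence `ε_d(τ p ⊙_d τ q) = ε_d(τ p) · ε_d(τ q) = p · q`, and applying
`τ` to this gives the formula for `⊙_d`.
-/

def brahmagupta (d : ℝ) (p q : ℝ × ℝ) : ℝ × ℝ :=
  (p.1 * q.1 + d * p.2 * q.2, p.2 * q.1 + p.1 * q.2)

section

variable {d : ℝ}

lemma odot_sq_sub {x y : ℝ} (hxy : x + y ≠ 0) :
    odot d x y ^ 2 - d = (x ^ 2 - d) * (y ^ 2 - d) / (x + y) ^ 2 := by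
  rw [odot]
  field_simp
  ring

theorem eps_odot {x y : ℝ} (hxy : x + y ≠ 0) (hx : x ^ 2 - d ≠ 0) (hy : y ^ 2 - d ≠ 0) :
    eps d (odot d x y) = brahmagupta d (eps d x) (eps d y) := by
  have hsq : odot d x y ^ 2 + d = ((d + x * y) ^ 2 + d * (x + y) ^ 2) / (x + y) ^ 2 := by
    rw [odot]
    field_simp
  simp only [eps, brahmagupta, odot_sq_sub hxy, hsq, Prod.mk.injEq]
  constructor
  · field_simp
    ring
  · rw [odot]
    field_simp
    ring

/-- At `m = 0` this uses `τ(-1, 0) = 0 / 0 = 0`. -/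
lemma tau_eps {m : ℝ} (hm : m ^ 2 - d ≠ 0) : tau (eps d m) = m := by
  have hnum : 1 + (m ^ 2 + d) / (m ^ 2 - d) = m * (2 * m / (m ^ 2 - d)) := by
    field_simp
    ring
  rw [tau, eps, hnum]
  rcases eq_or_ne m 0 with rfl | hm0
  · simp
  · exact mul_div_cancel_right₀ m (div_ne_zero (mul_ne_zero two_ne_zero hm0) hm)

variable {s t : ℝ}

lemma one_add_ne_zero_of_sq_sub_mul_sq (hd : d ≠ 0) (hst : s ^ 2 - d * t ^ 2 = 1)
    (ht : t ≠ 0) : 1 + s ≠ 0 := by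
  intro hs
  have : d * t ^ 2 = 0 := by
    rw [show s = -1 by linarith] at hst
    linarith
  exact mul_ne_zero hd (pow_ne_zero 2 ht) this

lemma tau_sq_sub (hst : s ^ 2 - d * t ^ 2 = 1) (ht : t ≠ 0) :
    tau (s, t) ^ 2 - d = 2 * (1 + s) / t ^ 2 := by
  rw [tau, div_pow, eq_div_iff (pow_ne_zero 2 ht), sub_mul, div_mul_cancel₀ _ (pow_ne_zero 2 ht)]
  linear_combination hst

lemma tau_sq_sub_ne_zero (hd : d ≠ 0) (hst : s ^ 2 - d * t ^ 2 = 1) (ht : t ≠ 0) :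
    tau (s, t) ^ 2 - d ≠ 0 := by
  rw [tau_sq_sub hst ht]
  exact div_ne_zero (mul_ne_zero two_ne_zero (one_add_ne_zero_of_sq_sub_mul_sq hd hst ht))
    (pow_ne_zero 2 ht)

theorem eps_tau (hd : d ≠ 0) (hst : s ^ 2 - d * t ^ 2 = 1) (ht : t ≠ 0) :
    eps d (tau (s, t)) = (s, t) := by
  have hs := one_add_ne_zero_of_sq_sub_mul_sq hd hst ht
  simp only [eps, tau_sq_sub hst ht, Prod.mk.injEq]
  rw [tau]
  constructor
  · field_simp
    linear_combination (-1) * hst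
  · field_simp

end

theorem pushforward_is_brahmagupta_general (d : ℝ) (hd : 0 < d)
    (s t u v : ℝ)
    (hst : s ^ 2 - d * t ^ 2 = 1) (huv : u ^ 2 - d * v ^ 2 = 1)
    (ht : t ≠ 0) (hv : v ≠ 0)
    (hsum : tau (s, t) + tau (u, v) ≠ 0) :
    eps d (odot d (tau (s, t)) (tau (u, v))) = (s * u + d * t * v, t * u + s * v) ∧
    odot d ((1 + s) / t) ((1 + u) / v) =
      (1 + (s * u + d * t * v)) / (t * u + s * v) := by
  have hx := tau_sq_sub_ne_zero hd.ne' hst ht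
  have hy := tau_sq_sub_ne_zero hd.ne' huv hv
  have hpush : eps d (odot d (tau (s, t)) (tau (u, v))) = (s * u + d * t * v, t * u + s * v) := by
    rw [eps_odot hsum hx hy, eps_tau hd.ne' hst ht, eps_tau hd.ne' huv hv, brahmagupta]
  have hm : odot d (tau (s, t)) (tau (u, v)) ^ 2 - d ≠ 0 := by
    rw [odot_sq_sub hsum]
    exact div_ne_zero (mul_ne_zero hx hy) (pow_ne_zero 2 hsum)
  refine ⟨hpush, ?_⟩
  calc odot d ((1 + s) / t) ((1 + u) / v)
      = tau (eps d (odot d (tau (s, t)) (tau (u, v)))) := (tau_eps hm).symm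
    _ = (1 + (s * u + d * t * v)) / (t * u + s * v) := by rw [hpush, tau]

/-- The pushforward of ⊙_d under ε_d is the Brahmagupta product. -/
theorem pushforward_is_brahmagupta (d : ℝ) (hd : 0 < d)
    (hirr : Irrational (Real.sqrt d)) (s t u v : ℝ)
    (hst : s ^ 2 - d * t ^ 2 = 1) (huv : u ^ 2 - d * v ^ 2 = 1)
    (ht : t ≠ 0) (hv : v ≠ 0)
    (hsum : tau (s, t) + tau (u, v) ≠ 0) :
    eps d (odot d (tau (s, t)) (tau (u, v))) = (s * u + d * t * v, t * u + s * v) ∧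
    odot d ((1 + s) / t) ((1 + u) / v) =
      (1 + (s * u + d * t * v)) / (t * u + s * v) :=
  pushforward_is_brahmagupta_general d hd s t u v hst huv ht hv hsum
end

section
/- For any point (x,y) on H_d with y ≠ 0, the 2n-th ⊙_d-power of (1+x)/y equals N_n(x²−1,x)/(y·D_n(x²−1,x)); equivalently, (1 + N_{2n}(x²−1,x))/(y·D_{2n}(x²−1,x)) = N_n(x²−1,x)/(y·D_n(x²−1,x)). Consequently, if (x_1,y_1) satisfies x_1² − d y_1² = 1 and (x_n, y_n) is its n-th ⊙_H-power, then Q_{2n}(d, (x_1+1)/y_1) = x_n/y_n. -/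
/-!
The `n`-th `⊙_H`-power of `(x, y)` is `(N_n(dy², x), y D_n(dy², x))`, both sides being the
components of `(x + y√d)ⁿ`, and `p ↦ p.1 / p.2` carries `⊙_H` to `⊙_d` wherever second components
are nonzero. On `H_d`, `(1 + x, y) ⊙_H (1 + x, y) = 2(1 + x) • (x, y)`, and scalar multiples have
the same ratio, so both `2n`-th powers in the statement reduce to the ratio of the `n`-th
`⊙_H`-power of `(x, y)`. No `⊙_H`-power of `(1 + x, y)` has vanishing second component since, for
`d > 0`, `(1 + x) ± y√d` have different absolute values. The middle identity is the doubling
formula for `N_{2n}`, `D_{2n}` combined with `N_n² - (x² - 1) D_n² = 1`.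
-/

/-- N_n(d,z) = Σ_{k=0}^{⌊n/2⌋} C(n,2k) d^k z^(n-2k). -/
def Nred {R : Type*} [CommRing R] (d z : R) (n : ℕ) : R :=
  ∑ k ∈ Finset.range (n / 2 + 1), (n.choose (2 * k) : R) * d ^ k * z ^ (n - 2 * k)

/-- D_n(d,z) = Σ_{k=0}^{⌊n/2⌋} C(n,2k+1) d^k z^(n-2k-1). -/
def Dred {R : Type*} [CommRing R] (d z : R) (n : ℕ) : R :=
  ∑ k ∈ Finset.range (n / 2 + 1), (n.choose (2 * k + 1) : R) * d ^ k * z ^ (n - 2 * k - 1)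

/-- The Rédei rational function Q_n(c,z) = N_n(c,z)/D_n(c,z). -/
noncomputable def Qred (c z : ℝ) (n : ℕ) : ℝ := Nred c z n / Dred c z n

/-- `odpow d z n` is the ⊙_d-product of n+1 copies of z. -/
noncomputable def odpow (d z : ℝ) : ℕ → ℝ
  | 0 => z
  | n + 1 => odot d (odpow d z n) z

/-- The Brahmagupta product (s,t) ⊙_H (u,v) = (su + dtv, tu + sv). -/
def pellMul (d : ℝ) (p q : ℝ × ℝ) : ℝ × ℝ :=
  (p.1 * q.1 + d * p.2 * q.2, p.2 * q.1 + p.1 * q.2)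

/-- n-th power with respect to ⊙_H, with identity (1,0). -/
def pellPow (d : ℝ) (p : ℝ × ℝ) : ℕ → ℝ × ℝ
  | 0 => (1, 0)
  | n + 1 => pellMul d (pellPow d p n) p

section Redei

open Finset

variable {R : Type*} [CommRing R] (c z : R)

@[simp] lemma Nred_zero : Nred c z 0 = 1 := by simp [Nred]

@[simp] lemma Dred_zero : Dred c z 0 = 0 := by simp [Dred]

lemma Nred_eq_sum_range {n m : ℕ} (hm : n / 2 < m) :
    Nred c z n = ∑ k ∈ range m, (n.choose (2 * k) : R) * c ^ k * z ^ (n - 2 * k) := by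
  refine sum_subset (range_subset_range.2 hm) fun k _ hk => ?_
  simp only [mem_range, not_lt] at hk
  simp [Nat.choose_eq_zero_of_lt (by omega : n < 2 * k)]

lemma Dred_eq_sum_range {n m : ℕ} (hm : n / 2 < m) :
    Dred c z n = ∑ k ∈ range m, (n.choose (2 * k + 1) : R) * c ^ k * z ^ (n - 2 * k - 1) := by
  refine sum_subset (range_subset_range.2 hm) fun k _ hk => ?_
  simp only [mem_range, not_lt] at hk
  simp [Nat.choose_eq_zero_of_lt (by omega : n < 2 * k + 1)]

/-- The truncated exponent `n - (j + 1)` is harmless: when it truncates, the binomial vanishes. -/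
lemma choose_succ_mul_pow_sub_succ_mul (n j : ℕ) :
    (n.choose (j + 1) : R) * z ^ (n - (j + 1)) * z = n.choose (j + 1) * z ^ (n - j) := by
  rcases lt_or_ge n (j + 1) with h | h
  · simp [Nat.choose_eq_zero_of_lt h]
  · rw [mul_assoc, ← pow_succ, show n - (j + 1) + 1 = n - j by omega]

lemma Nred_succ (n : ℕ) : Nred c z (n + 1) = z * Nred c z n + c * Dred c z n := by
  rw [Nred_eq_sum_range c z (m := n + 2) (by omega), Nred_eq_sum_range c z (m := n + 2) (by omega),
    Dred_eq_sum_range c z (m := n + 1) (by omega), sum_range_succ' _ (n + 1), mul_sum, mul_sum,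
    sum_range_succ' _ (n + 1), add_right_comm _ (z * _), ← sum_add_distrib]
  congr 1
  · refine sum_congr rfl fun k _ => ?_
    have h := choose_succ_mul_pow_sub_succ_mul z n (2 * k + 1)
    rw [show 2 * (k + 1) = 2 * k + 1 + 1 by ring, Nat.choose_succ_succ', Nat.cast_add,
      show n + 1 - (2 * k + 1 + 1) = n - (2 * k + 1) by omega, Nat.sub_sub]
    linear_combination -(c ^ (k + 1)) * h
  · simp [pow_succ, mul_comm]

lemma Dred_succ (n : ℕ) : Dred c z (n + 1) = Nred c z n + z * Dred c z n := by
  rw [Dred_eq_sum_range c z (m := n + 2) (by omega), Nred_eq_sum_range c z (m := n + 2) (by omega),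
    Dred_eq_sum_range c z (m := n + 2) (by omega), mul_sum, ← sum_add_distrib]
  refine sum_congr rfl fun k _ => ?_
  have h := choose_succ_mul_pow_sub_succ_mul z n (2 * k)
  rw [Nat.choose_succ_succ', Nat.cast_add, show n + 1 - 2 * k - 1 = n - 2 * k by omega, Nat.sub_sub]
  linear_combination -(c ^ k) * h

end Redei

section Pell

variable (d : ℝ)

lemma pellMul_assoc (p q r : ℝ × ℝ) :
    pellMul d (pellMul d p q) r = pellMul d p (pellMul d q r) := by
  simp only [pellMul, Prod.mk.injEq]
  constructor <;> ring

lemma pellPow_succ (p : ℝ × ℝ) (n : ℕ) : pellPow d p (n + 1) = pellMul d (pellPow d p n) p := rfl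

@[simp] lemma pellPow_one (p : ℝ × ℝ) : pellPow d p 1 = p := by
  simp [pellPow, pellMul]

lemma pellPow_add (p : ℝ × ℝ) (m n : ℕ) :
    pellPow d p (m + n) = pellMul d (pellPow d p m) (pellPow d p n) := by
  induction n with
  | zero => simp [pellPow, pellMul]
  | succ n ih => rw [← add_assoc, pellPow_succ, pellPow_succ, ih, pellMul_assoc]

lemma pellPow_mul (p : ℝ × ℝ) (m n : ℕ) : pellPow d p (m * n) = pellPow d (pellPow d p m) n := by
  induction n with
  | zero => rfl
  | succ n ih => rw [mul_add_one, pellPow_add, ih, pellPow_succ]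

lemma pellPow_smul (a : ℝ) (p : ℝ × ℝ) (n : ℕ) : pellPow d (a • p) n = a ^ n • pellPow d p n := by
  induction n with
  | zero => simp [pellPow]
  | succ n ih =>
    rw [pellPow_succ, pellPow_succ, ih]
    simp only [pellMul, Prod.smul_fst, Prod.smul_snd, smul_eq_mul, Prod.smul_mk, Prod.mk.injEq]
    constructor <;> ring

lemma pellPow_norm (p : ℝ × ℝ) (n : ℕ) :
    (pellPow d p n).1 ^ 2 - d * (pellPow d p n).2 ^ 2 = (p.1 ^ 2 - d * p.2 ^ 2) ^ n := by
  induction n with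
  | zero => simp [pellPow]
  | succ n ih =>
    rw [pellPow_succ, pow_succ (p.1 ^ 2 - d * p.2 ^ 2), ← ih]
    simp only [pellMul]
    ring

lemma pellPow_fst_add_snd_mul {s : ℝ} (hs : s ^ 2 = d) (p : ℝ × ℝ) (n : ℕ) :
    (pellPow d p n).1 + (pellPow d p n).2 * s = (p.1 + p.2 * s) ^ n := by
  induction n with
  | zero => simp [pellPow]
  | succ n ih =>
    rw [pellPow_succ, pow_succ, ← ih]
    simp only [pellMul]
    linear_combination -(pellPow d p n).2 * p.2 * hs

lemma pellPow_snd_ne_zero {d : ℝ} (hd : 0 < d) {u v : ℝ} (hu : u ≠ 0) (hv : v ≠ 0) {n : ℕ}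
    (hn : n ≠ 0) : (pellPow d (u, v) n).2 ≠ 0 := by
  intro h
  have hs : √d ^ 2 = d := Real.sq_sqrt hd.le
  have hs' : (-√d) ^ 2 = d := by rw [neg_sq, hs]
  have hplus := pellPow_fst_add_snd_mul d hs (u, v) n
  have hminus := pellPow_fst_add_snd_mul d hs' (u, v) n
  rw [h, zero_mul, add_zero] at hplus hminus
  have hpow : (u + v * √d) ^ n = (u + v * -√d) ^ n := hplus.symm.trans hminus
  rcases (pow_eq_pow_iff_of_ne_zero hn).1 hpow with heq | ⟨heq, -⟩
  · have : v * √d = 0 := by linarith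
    exact mul_ne_zero hv (Real.sqrt_ne_zero'.2 hd) this
  · exact hu (by linarith)

lemma pellPow_eq_Nred_Dred (x y : ℝ) (n : ℕ) :
    pellPow d (x, y) n = (Nred (d * y ^ 2) x n, y * Dred (d * y ^ 2) x n) := by
  induction n with
  | zero => simp [pellPow]
  | succ n ih =>
    rw [pellPow_succ, ih, Nred_succ, Dred_succ]
    simp only [pellMul, Prod.mk.injEq]
    constructor <;> ring

lemma pellPow_mk_one_eq_Nred_Dred (z : ℝ) (n : ℕ) : pellPow d (z, 1) n = (Nred d z n, Dred d z n) := by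
  simp [pellPow_eq_Nred_Dred]

end Pell

lemma Qred_eq_pellPow (c z : ℝ) (n : ℕ) :
    Qred c z n = (pellPow c (z, 1) n).1 / (pellPow c (z, 1) n).2 := by
  rw [pellPow_mk_one_eq_Nred_Dred, Qred]

lemma one_add_Nred_two_mul_div {c z : ℝ} (hz : z ^ 2 - c = 1) (y : ℝ) (n : ℕ) :
    (1 + Nred c z (2 * n)) / (y * Dred c z (2 * n)) = Nred c z n / (y * Dred c z n) := by
  have hdouble := pellPow_add c (z, 1) n n
  rw [← two_mul, pellPow_mk_one_eq_Nred_Dred, pellPow_mk_one_eq_Nred_Dred] at hdouble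
  have hnorm := pellPow_norm c (z, 1) n
  simp only [pellPow_mk_one_eq_Nred_Dred, one_pow, mul_one, hz] at hnorm
  simp only [pellMul, Prod.mk.injEq] at hdouble
  rw [hdouble.1, hdouble.2]
  set N := Nred c z n
  set D := Dred c z n
  have hnum : 1 + (N * N + c * D * D) = 2 * N * N := by linear_combination -hnorm
  have hden : y * (D * N + N * D) = 2 * N * (y * D) := by ring
  rcases eq_or_ne N 0 with hN | hN
  · simp [hN]
  · rw [hnum, hden, mul_div_mul_left _ _ (mul_ne_zero two_ne_zero hN)]

lemma smul_fst_div_smul_snd {a : ℝ} (ha : a ≠ 0) (p : ℝ × ℝ) : (a • p).1 / (a • p).2 = p.1 / p.2 :=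
  mul_div_mul_left _ _ ha

lemma odot_div_div (d : ℝ) {p q : ℝ × ℝ} (hp : p.2 ≠ 0) (hq : q.2 ≠ 0) :
    odot d (p.1 / p.2) (q.1 / q.2) = (pellMul d p q).1 / (pellMul d p q).2 := by
  have hnum : d + p.1 / p.2 * (q.1 / q.2) = (p.1 * q.1 + d * p.2 * q.2) / (p.2 * q.2) := by
    field_simp
    ring
  have hden : p.1 / p.2 + q.1 / q.2 = (p.2 * q.1 + p.1 * q.2) / (p.2 * q.2) := by
    field_simp
    ring
  rw [odot, hnum, hden, div_div_div_cancel_right₀ (mul_ne_zero hp hq), pellMul]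

lemma odpow_div_eq_pellPow (d a b : ℝ) (h : ∀ k, (pellPow d (a, b) (k + 1)).2 ≠ 0) (m : ℕ) :
    odpow d (a / b) m = (pellPow d (a, b) (m + 1)).1 / (pellPow d (a, b) (m + 1)).2 := by
  induction m with
  | zero => simp [odpow]
  | succ m ih =>
    rw [odpow, ih, pellPow_succ d _ (m + 1)]
    exact odot_div_div d (q := (a, b)) (h m) (by simpa using h 0)

lemma pellPow_one_add_two_mul {d x y : ℝ} (hxy : x ^ 2 - d * y ^ 2 = 1) (n : ℕ) :
    pellPow d (1 + x, y) (2 * n) = (2 * (1 + x)) ^ n • pellPow d (x, y) n := by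
  have hsq : pellPow d (1 + x, y) 2 = (2 * (1 + x)) • (x, y) := by
    rw [pellPow_succ d _ 1, pellPow_one]
    simp only [pellMul, Prod.smul_mk, smul_eq_mul, Prod.mk.injEq]
    constructor
    · linear_combination -hxy
    · ring
  rw [pellPow_mul, hsq, pellPow_smul]

theorem redei_pell_convergents_general (d : ℕ) (hd : 0 < d)
    (x y : ℝ) (hxy : x ^ 2 - (d : ℝ) * y ^ 2 = 1) (hy : y ≠ 0)
    (n : ℕ) (hn : 1 ≤ n) :
    odpow (d : ℝ) ((1 + x) / y) (2 * n - 1) =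
      Nred (x ^ 2 - 1) x n / (y * Dred (x ^ 2 - 1) x n) ∧
    (1 + Nred (x ^ 2 - 1) x (2 * n)) / (y * Dred (x ^ 2 - 1) x (2 * n)) =
      Nred (x ^ 2 - 1) x n / (y * Dred (x ^ 2 - 1) x n) ∧
    Qred (d : ℝ) ((x + 1) / y) (2 * n) =
      (pellPow (d : ℝ) (x, y) n).1 / (pellPow (d : ℝ) (x, y) n).2 := by
  have hx : 1 + x ≠ 0 := by
    have : 0 < (d : ℝ) * y ^ 2 := by positivity
    intro h
    nlinarith
  have hratio : (pellPow d (1 + x, y) (2 * n)).1 / (pellPow d (1 + x, y) (2 * n)).2 =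
      (pellPow d (x, y) n).1 / (pellPow d (x, y) n).2 := by
    rw [pellPow_one_add_two_mul hxy, smul_fst_div_smul_snd (pow_ne_zero _ (by simpa using hx))]
  refine ⟨?_, one_add_Nred_two_mul_div (by ring) y n, ?_⟩
  · have hne (k : ℕ) : (pellPow d (1 + x, y) (k + 1)).2 ≠ 0 :=
      pellPow_snd_ne_zero (by exact_mod_cast hd) hx hy k.succ_ne_zero
    rw [odpow_div_eq_pellPow d _ _ hne, Nat.sub_add_cancel (by omega), hratio, pellPow_eq_Nred_Dred,
      show (d : ℝ) * y ^ 2 = x ^ 2 - 1 by linarith]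
  · have hscale : ((x + 1) / y, (1 : ℝ)) = y⁻¹ • (1 + x, y) := by
      rw [Prod.smul_mk, smul_eq_mul, smul_eq_mul, inv_mul_cancel₀ hy, add_comm, div_eq_inv_mul]
    rw [Qred_eq_pellPow, hscale, pellPow_smul, smul_fst_div_smul_snd (pow_ne_zero _ (inv_ne_zero hy)),
      hratio]

theorem redei_pell_convergents (d : ℕ) (hd : 0 < d) (hns : ¬ IsSquare d)
    (x y : ℝ) (hxy : x ^ 2 - (d : ℝ) * y ^ 2 = 1) (hy : y ≠ 0)
    (n : ℕ) (hn : 1 ≤ n) :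
    odpow (d : ℝ) ((1 + x) / y) (2 * n - 1) =
      Nred (x ^ 2 - 1) x n / (y * Dred (x ^ 2 - 1) x n) ∧
    (1 + Nred (x ^ 2 - 1) x (2 * n)) / (y * Dred (x ^ 2 - 1) x (2 * n)) =
      Nred (x ^ 2 - 1) x n / (y * Dred (x ^ 2 - 1) x n) ∧
    Qred (d : ℝ) ((x + 1) / y) (2 * n) =
      (pellPow (d : ℝ) (x, y) n).1 / (pellPow (d : ℝ) (x, y) n).2 :=
  redei_pell_convergents_general d hd x y hxy hy n hn
end
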